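/- arXiv:1010.3039 — 2 statements merged into one kernel-verified Lean document; each statement's English description precedes it below -/
import Mathlib

section
/- There exist a finite alphabet A and a quasi-regular 3-variable language L over A such that the 2-variable language {(b, c) in (A*)^2 : for all a in A*, (a, b, c) in L} is not quasi-regular. In particular, universal quantification over a coordinate does not preserve quasi-regularity. -/
/-!
The witness is the language of the automaton `probe`, which accepts `(u, v, w)` iff
`|v| ≤ |u|` or `w[|v| - |u| - 1] = v[|u|]`: the first word only points at a position. So for
`|v| = |w|`, the pair `(v, w)` lies in the universal projection iff `w = v.reverse`.

No semi-sorted automaton `N` recognises reversal on words of equal length. Cut the accepting run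
on `(v, v.reverse)`, `|v| = m`, after `m` steps: `N` is then in some state, having read `k`
letters of `v` and `m - k` of `v.reverse`. Once `|N| (m + 1) < 2 ^ m`, two words `v ≠ v'` share
the state and `k`, and the first half of the run on `v` followed by the second half of the run on
`v'` accepts `(v[..k] ++ v'[k..], v.reverse[..m-k] ++ v'.reverse[m-k..])`, a pair of equal
lengths that is a reversal only if `v = v'`.
-/

/-- An `n`-tape semi-sorted (deterministic) asynchronous automaton over `A`:
a partial deterministic finite state automaton over `A ∪ {$}` (unique start state,
no `ε`-transitions, at most one transition from each state for each letter; the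
padding symbol `$` is modelled by `none : Option A`), together with a partition of
its states into `n` sets (recorded by `tape`, where `tape s = i` means `s ∈ S_i`). -/
structure SemiSortedAA (A : Type) (n : ℕ) where
  State : Type
  fintype : Fintype State
  start : State
  accept : Set State
  /-- partial deterministic transition function over the alphabet `A ∪ {$}` -/
  step : State → Option A → Option State
  /-- the index `i` such that the state lies in `S_i` -/
  tape : State → Fin n

namespace SemiSortedAA

variable {A : Type} {n : ℕ}

/-- `M.Run s r f` : starting in state `s` with remaining (still unread) content `r i`
on the `i`-th tape, the automaton can consume all the remaining content and end in
state `f`, where from a state `s` it reads the next letter of tape `M.tape s`.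
This is exactly the existence of a shuffle of the tape contents labelling a path
from `s` to `f` in which every letter originating from the `i`-th tape is read
while the automaton is in a state of `S_i`. -/
inductive Run (M : SemiSortedAA A n) :
    M.State → (Fin n → List (Option A)) → M.State → Prop
  | nil (s : M.State) : Run M s (fun _ => []) s
  | step {s t f : M.State} {c : Option A} {rest : List (Option A)}
      {r : Fin n → List (Option A)}
      (h : M.step s c = some t)
      (hr : r (M.tape s) = c :: rest)
      (hrun : Run M t (Function.update r (M.tape s) rest) f) :
      Run M s r f

/-- `M` accepts the tuple of words `(w 1, …, w n)` if some shuffle of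
`(w 1 $, …, w n $)` labels a path from the start state to an accept state,
each letter from the `i`-th word (including its terminal `$`) being read in `S_i`. -/
def Accepts (M : SemiSortedAA A n) (w : Fin n → List A) : Prop :=
  ∃ f ∈ M.accept, M.Run M.start (fun i => (w i).map some ++ [none]) f

end SemiSortedAA

/-- An `n`-variable language is quasi-regular if it is the language accepted by some
`n`-tape semi-sorted asynchronous automaton. -/
def IsQuasiRegular {A : Type} {n : ℕ} (L : Set (Fin n → List A)) : Prop :=
  ∃ M : SemiSortedAA A n, ∀ w, w ∈ L ↔ M.Accepts w

theorem List.eq_of_reverse_splice {α : Type*} {x y : List α} {k l : ℕ}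
    (hx : x.length = k + l) (hy : y.length = k + l)
    (h : x.reverse.take l ++ y.reverse.drop l = (x.take k ++ y.drop k).reverse) : x = y := by
  rw [List.take_reverse, List.drop_reverse, hx, hy, Nat.add_sub_cancel, List.reverse_append] at h
  obtain ⟨hdrop, htake⟩ := List.append_inj h (by simp [hx, hy])
  rw [← List.take_append_drop k x, ← List.take_append_drop k y, List.reverse_inj.mp hdrop,
    List.reverse_inj.mp htake]

theorem Nat.exists_mul_succ_lt_two_pow (c : ℕ) : ∃ m, c * (m + 1) < 2 ^ m := by
  refine ⟨2 * c + 2, ?_⟩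
  have hc : c < 2 ^ c := Nat.lt_two_pow_self
  rw [show 2 ^ (2 * c + 2) = 4 * (2 ^ c * 2 ^ c) by ring]
  nlinarith

theorem sum_length_update_of_eq_cons {ι α : Type*} [Fintype ι] [DecidableEq ι] {r : ι → List α}
    {j : ι} {c : α} {rest : List α} (hr : r j = c :: rest) :
    ∑ i, (Function.update r j rest i).length + 1 = ∑ i, (r i).length := by
  have hupd : ∀ i, (Function.update r j rest i).length
      = Function.update (fun i => (r i).length) j rest.length i :=
    Function.apply_update (fun _ l => List.length l) r j rest
  simp only [hupd, Finset.sum_update_of_mem (Finset.mem_univ j),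
    Finset.sum_eq_add_sum_sdiff_singleton_of_mem (Finset.mem_univ j) (fun i => (r i).length), hr,
    List.length_cons]
  ring

namespace SemiSortedAA

section

variable {A : Type} {n : ℕ} {M : SemiSortedAA A n}

theorem run_empty_iff {s f : M.State} : M.Run s (fun _ => []) f ↔ f = s := by
  refine ⟨fun h => ?_, fun h => h ▸ Run.nil s⟩
  cases h with
  | nil => rfl
  | step _ hr _ => exact absurd hr (List.cons_ne_nil _ _).symm

theorem run_iff_of_cons {s f : M.State} {r : Fin n → List (Option A)} {c : Option A}
    {rest : List (Option A)} (hr : r (M.tape s) = c :: rest) :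
    M.Run s r f ↔ ∃ t, M.step s c = some t ∧ M.Run t (Function.update r (M.tape s) rest) f := by
  refine ⟨fun h => ?_, fun ⟨t, hs, ht⟩ => Run.step hs hr ht⟩
  cases h with
  | nil => exact absurd hr (List.cons_ne_nil _ _).symm
  | step hs hr' ht =>
    obtain ⟨rfl, rfl⟩ := List.cons_eq_cons.mp (hr'.symm.trans hr)
    exact ⟨_, hs, ht⟩

theorem Run.append {s t f : M.State} {p q : Fin n → List (Option A)}
    (hp : M.Run s p t) (hq : M.Run t q f) : M.Run s (fun i => p i ++ q i) f := by
  induction hp with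
  | nil => exact hq
  | @step s t' f' c rest r hs hr _ ih =>
    refine Run.step (rest := rest ++ q (M.tape s)) hs (by simp [hr]) ?_
    convert ih hq using 2 with i
    by_cases hi : i = M.tape s
    · subst hi; simp
    · simp [Function.update_of_ne hi]

theorem Run.exists_split {s f : M.State} {r : Fin n → List (Option A)} (h : M.Run s r f)
    {j : ℕ} (hj : j ≤ ∑ i, (r i).length) :
    ∃ t p q, (∀ i, r i = p i ++ q i) ∧ ∑ i, (p i).length = j ∧ M.Run s p t ∧ M.Run t q f := by
  induction h generalizing j with
  | nil s => exact ⟨s, fun _ => [], fun _ => [], fun _ => rfl, by simp_all, Run.nil s, Run.nil s⟩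
  | @step s t f c rest r hs hr ht ih =>
    rcases j with _ | j
    · exact ⟨s, fun _ => [], r, fun _ => rfl, by simp, Run.nil s, Run.step hs hr ht⟩
    have hlen := sum_length_update_of_eq_cons hr
    obtain ⟨t', p, q, hpq, hp, hpt, hqf⟩ := ih (j := j) (by omega)
    refine ⟨t', Function.update p (M.tape s) (c :: p (M.tape s)), q, fun i => ?_, ?_,
      Run.step hs (Function.update_self ..) ?_, hqf⟩
    · by_cases hi : i = M.tape s
      · subst hi; simpa [hr] using hpq (M.tape s)
      · simpa [Function.update_of_ne hi] using hpq i
    · rw [← sum_length_update_of_eq_cons (Function.update_self ..), Function.update_idem,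
        Function.update_eq_self, hp]
    · rwa [Function.update_idem, Function.update_eq_self]

def AcceptsThrough (M : SemiSortedAA A n) (w : Fin n → List A) (k : Fin n → ℕ) (t : M.State) :
    Prop :=
  M.Run M.start (fun i => ((w i).take (k i)).map some) t ∧
    ∃ f ∈ M.accept, M.Run t (fun i => ((w i).drop (k i)).map some ++ [none]) f

theorem AcceptsThrough.splice {w w' : Fin n → List A} {k : Fin n → ℕ} {t : M.State}
    (h : M.AcceptsThrough w k t) (h' : M.AcceptsThrough w' k t) :
    M.Accepts (fun i => (w i).take (k i) ++ (w' i).drop (k i)) := by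
  obtain ⟨f, hf, hrun⟩ := h'.2
  exact ⟨f, hf, by simpa using h.1.append hrun⟩

theorem Accepts.exists_acceptsThrough [NeZero n] {w : Fin n → List A} (h : M.Accepts w) {j : ℕ}
    (hj : ∀ i, j ≤ (w i).length) : ∃ k t, ∑ i, k i = j ∧ M.AcceptsThrough w k t := by
  obtain ⟨f, hf, hrun⟩ := h
  have hj_total : j ≤ ∑ i, ((w i).map some ++ [none]).length := by
    refine (hj 0).trans ((Nat.le_succ _).trans ?_)
    simpa using Finset.single_le_sum (f := fun i => (w i).length + 1) (fun i _ => Nat.zero_le _)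
      (Finset.mem_univ 0)
  obtain ⟨t, p, q, hpq, hp, hpt, hqf⟩ := hrun.exists_split hj_total
  have hle : ∀ i, (p i).length ≤ (w i).length := fun i =>
    (hp ▸ Finset.single_le_sum (fun i _ => Nat.zero_le _) (Finset.mem_univ i)).trans (hj i)
  have hp_eq : ∀ i, p i = ((w i).take (p i).length).map some := fun i => by
    rw [List.map_take, ← List.take_append_of_le_length (by simpa using hle i), hpq,
      List.take_left]
  have hq_eq : ∀ i, q i = ((w i).drop (p i).length).map some ++ [none] := fun i => by
    rw [List.map_drop, ← List.drop_append_of_le_length (by simpa using hle i), hpq,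
      List.drop_left]
  refine ⟨fun i => (p i).length, t, hp, ?_, f, hf, ?_⟩
  · convert hpt using 2 with i
    exact (hp_eq i).symm
  · convert hqf using 2 with i
    exact (hq_eq i).symm

end

section

variable {A : Type} {M : SemiSortedAA A 3} {s f : M.State} {x : Option A}
  {a b c : List (Option A)}

theorem run_nil_nil_nil_iff : M.Run s ![[], [], []] f ↔ f = s := by
  convert run_empty_iff using 2
  funext i; fin_cases i <;> rfl

theorem run_cons_zero_iff (hs : M.tape s = 0) :
    M.Run s ![x :: a, b, c] f ↔ ∃ t, M.step s x = some t ∧ M.Run t ![a, b, c] f := by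
  rw [run_iff_of_cons (by rw [hs]; rfl), hs]
  congr! 4; funext i; fin_cases i <;> rfl

theorem run_cons_one_iff (hs : M.tape s = 1) :
    M.Run s ![a, x :: b, c] f ↔ ∃ t, M.step s x = some t ∧ M.Run t ![a, b, c] f := by
  rw [run_iff_of_cons (by rw [hs]; rfl), hs]
  congr! 4; funext i; fin_cases i <;> rfl

theorem run_cons_two_iff (hs : M.tape s = 2) :
    M.Run s ![a, b, x :: c] f ↔ ∃ t, M.step s x = some t ∧ M.Run t ![a, b, c] f := by
  rw [run_iff_of_cons (by rw [hs]; rfl), hs]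
  congr! 4; funext i; fin_cases i <;> rfl

end

theorem not_forall_accepts_iff_eq_reverse (N : SemiSortedAA Bool 2) :
    ¬ ∀ b c : List Bool, b.length = c.length → (N.Accepts ![b, c] ↔ c = b.reverse) := by
  intro hN
  let _ : Fintype N.State := N.fintype
  obtain ⟨m, hm⟩ := Nat.exists_mul_succ_lt_two_pow (Fintype.card N.State)
  have hcut : ∀ v : Fin m → Bool, ∃ k t, ∑ i, k i = m ∧
      N.AcceptsThrough ![List.ofFn v, (List.ofFn v).reverse] k t := fun v =>
    ((hN _ _ (by simp)).2 rfl).exists_acceptsThrough (fun i => by fin_cases i <;> simp)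
  choose k t hk ht using hcut
  have hk0 : ∀ v, k v 0 < m + 1 := fun v => by
    have := hk v; rw [Fin.sum_univ_two] at this; omega
  obtain ⟨v, v', hne, hsame⟩ := Fintype.exists_ne_map_eq_of_card_lt
    (fun v => (t v, (⟨k v 0, hk0 v⟩ : Fin (m + 1)))) (by simpa using hm)
  simp only [Prod.mk.injEq, Fin.mk.injEq] at hsame
  have hkk : k v' = k v := by
    have hv := hk v
    have hv' := hk v'
    simp only [Fin.sum_univ_two] at hv hv'
    funext i
    fin_cases i
    · exact hsame.2.symm
    · simp only [Fin.mk_one, Fin.isValue]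
      omega
  have hsplice := (ht v).splice (hkk ▸ hsame.1 ▸ ht v')
  set x := List.ofFn v
  set y := List.ofFn v'
  have hx : x.length = k v 0 + k v 1 := by simpa [x, Fin.sum_univ_two] using (hk v).symm
  have hy : y.length = k v 0 + k v 1 := by simpa [y, Fin.sum_univ_two] using (hk v).symm
  have hrev : x.reverse.take (k v 1) ++ y.reverse.drop (k v 1)
      = (x.take (k v 0) ++ y.drop (k v 0)).reverse := by
    refine (hN _ _ ?_).1 ?_
    · simp only [List.length_append, List.length_take, List.length_drop, List.length_reverse]
      omega
    · convert hsplice using 2 with i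
      fin_cases i <;> rfl
  exact hne (List.ofFn_injective (List.eq_of_reverse_splice hx hy hrev))

end SemiSortedAA

/- `probe` reads `u` and `v` in lockstep; when `u` ends first it stores `x = v[|u|]` (`fetch`),
reads the rest of `v` in lockstep with `w`, and checks that the next letter of `w` is `x`
(`compare`). When `v` ends no later than `u` it accepts. -/
inductive ProbeState : Type
  | pairA | pairB | fetch | countB (x : Bool) | countC (x : Bool) | compare (x : Bool)
  | skipA | skipC | done
  deriving Fintype

namespace ProbeState

-- Reducible, like `probe`, so that `simp` can discharge the side conditions `M.tape s = i`.
abbrev tape : ProbeState → Fin 3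
  | pairA | skipA | done => 0
  | pairB | fetch | countB _ => 1
  | countC _ | compare _ | skipC => 2

def step : ProbeState → Option Bool → Option ProbeState
  | pairA, some _ => some pairB
  | pairA, none => some fetch
  | pairB, some _ => some pairA
  | pairB, none => some skipA
  | fetch, some x => some (countB x)
  | fetch, none => some skipC
  | countB x, some _ => some (countC x)
  | countB x, none => some (compare x)
  | countC x, some _ => some (countB x)
  | compare x, some y => if y = x then some skipC else none
  | skipA, some _ => some skipA
  | skipA, none => some skipC
  | skipC, some _ => some skipC
  | skipC, none => some done
  | _, _ => none

end ProbeState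

abbrev probe : SemiSortedAA Bool 3 where
  State := ProbeState
  fintype := inferInstance
  start := .pairA
  accept := {.done}
  step := ProbeState.step
  tape := ProbeState.tape

open SemiSortedAA ProbeState

local notation "pad " w => List.map some w ++ [none]

attribute [local simp] run_nil_nil_nil_iff run_cons_zero_iff run_cons_one_iff run_cons_two_iff
  ProbeState.step

theorem probe_run_skipC_iff (w : List Bool) {f : ProbeState} :
    probe.Run skipC ![[], [], pad w] f ↔ f = done := by
  induction w with
  | nil => simp
  | cons _ _ ih => simpa using ih

theorem probe_run_skipA_iff (u w : List Bool) {f : ProbeState} :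
    probe.Run skipA ![pad u, [], pad w] f ↔ f = done := by
  induction u with
  | nil => simpa using probe_run_skipC_iff w
  | cons _ _ ih => simpa using ih

theorem probe_run_countB_iff (x : Bool) (v w : List Bool) {f : ProbeState} :
    probe.Run (countB x) ![[], pad v, pad w] f ↔ f = done ∧ w[v.length]? = some x := by
  induction v generalizing w with
  | nil =>
    cases w with
    | nil => simp
    | cons _ w => simp [probe_run_skipC_iff, eq_comm, and_comm]
  | cons _ v ih =>
    cases w with
    | nil => simp
    | cons _ w => simpa using ih w

theorem probe_run_pairA_iff (u v w : List Bool) {f : ProbeState} :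
    probe.Run pairA ![pad u, pad v, pad w] f ↔
      f = done ∧ (v.length ≤ u.length ∨ w[v.length - (u.length + 1)]? = v[u.length]?) := by
  induction u generalizing v with
  | nil =>
    cases v with
    | nil => simpa using probe_run_skipC_iff w
    | cons y v => simpa using probe_run_countB_iff y v w
  | cons _ u ih =>
    cases v with
    | nil => simpa using probe_run_skipA_iff u w
    | cons _ v => simpa using ih v

theorem probe_accepts_iff (u v w : List Bool) :
    probe.Accepts ![u, v, w] ↔
      v.length ≤ u.length ∨ w[v.length - (u.length + 1)]? = v[u.length]? := by
  have htapes : (fun i => (![u, v, w] i).map some ++ [none]) = ![pad u, pad v, pad w] := by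
    funext i; fin_cases i <;> rfl
  simp [Accepts, htapes, probe_run_pairA_iff]

theorem probe_accepts_iff_of_length_eq {v w : List Bool} (hvw : v.length = w.length)
    (u : List Bool) : probe.Accepts ![u, v, w] ↔ v[u.length]? = w.reverse[u.length]? := by
  rw [probe_accepts_iff]
  rcases lt_or_ge u.length v.length with huv | hvu
  · rw [List.getElem?_reverse (by omega), eq_comm, ← hvw, Nat.sub_sub, Nat.add_comm 1]
    simp [huv.not_ge]
  · simp [hvu, hvw ▸ hvu]

theorem forall_probe_accepts_iff {v w : List Bool} (hvw : v.length = w.length) :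
    (∀ u, probe.Accepts ![u, v, w]) ↔ w = v.reverse := by
  simp only [probe_accepts_iff_of_length_eq hvw]
  constructor
  · intro h
    rw [← List.reverse_reverse w]
    exact congrArg List.reverse
      (List.ext_getElem? fun k => by simpa using (h (List.replicate k true)).symm)
  · rintro rfl u
    simp

/-- Universal quantification over a coordinate does not preserve quasi-regularity:
there are a finite alphabet `A` and a quasi-regular three-variable language `L`
over `A` such that `{(b, c) : ∀ a, (a, b, c) ∈ L}` is not quasi-regular. -/
theorem quasiRegular_not_closed_under_forall :
    ∃ (A : Type) (_ : Fintype A) (L : Set (Fin 3 → List A)),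
      IsQuasiRegular L ∧
      ¬ IsQuasiRegular { v : Fin 2 → List A | ∀ a : List A, Fin.cons a v ∈ L } := by
  refine ⟨Bool, inferInstance, {w | probe.Accepts w}, ⟨probe, fun _ => Iff.rfl⟩, ?_⟩
  rintro ⟨N, hN⟩
  exact N.not_forall_accepts_iff_eq_reverse fun v w hvw =>
    (hN ![v, w]).symm.trans (forall_probe_accepts_iff hvw)
end

section
/- If L is a quasi-regular 2-variable language over a finite alphabet A, then the 1-variable language {v in A* : for all u in A*, (u, v) in L} is a regular language over A. -/
/-!
Since `u` is universally quantified, once part of the run on `(u $, v $)` has been traced, the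
unread rest of `u $` is arbitrary. So a configuration of the run only needs to record the current
state and whether the `$` of `u` has been read. Reading a prefix `x` of `v` while guessing `u`
leads to a set of such configurations (plus a marker for "already rejected"), and this set
determines the left quotient of `{v | ∀ u, (u, v) ∈ L}` by `x`. There are finitely many such sets,
so the language is regular by the Myhill–Nerode theorem.
-/

lemma update_vecCons_zero {α : Type*} (a a' b : α) : Function.update ![a, b] 0 a' = ![a', b] :=
  Fin.update_cons_zero ..

lemma update_vecCons_one {α : Type*} (a b b' : α) : Function.update ![a, b] 1 b' = ![a, b'] := by
  funext i; fin_cases i <;> rfl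

/-- The unread part of a padded word `w $`, before (`true`) or after (`false`) its `$` is read. -/
def paddedTail {A : Type} : Bool → List A → List (Option A)
  | true, w => w.map some ++ [none]
  | false, _ => []

lemma exists_paddedTail_true_eq_cons {A : Type} (c : Option A) (w : List A) :
    ∃ w', paddedTail true w' = c :: paddedTail c.isSome w := by
  cases c with
  | none => exact ⟨[], rfl⟩
  | some a => exact ⟨a :: w, rfl⟩

lemma exists_cons_eq_paddedTail_true {A : Type} (w : List A) :
    ∃ c w', paddedTail true w = c :: paddedTail c.isSome w' := by
  cases w with
  | nil => exact ⟨none, [], rfl⟩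
  | cons a w => exact ⟨some a, w, rfl⟩

namespace SemiSortedAA

variable {A : Type}

section Tapes

variable {n : ℕ} (M : SemiSortedAA A n)

def AcceptsFrom (s : M.State) (r : Fin n → List (Option A)) : Prop :=
  ∃ f ∈ M.accept, M.Run s r f

variable {M}

theorem acceptsFrom_iff_of_step {s t : M.State} {r : Fin n → List (Option A)}
    {c : Option A} {rest : List (Option A)} (hr : r (M.tape s) = c :: rest)
    (h : M.step s c = some t) :
    M.AcceptsFrom s r ↔ M.AcceptsFrom t (Function.update r (M.tape s) rest) := by
  constructor
  · rintro ⟨f, hf, hrun⟩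
    cases hrun with
    | nil => simp at hr
    | step h' hr' hrun =>
      obtain ⟨rfl, rfl⟩ := List.cons_eq_cons.mp (hr'.symm.trans hr)
      exact ⟨f, hf, Option.some_injective _ (h'.symm.trans h) ▸ hrun⟩
  · rintro ⟨f, hf, hrun⟩
    exact ⟨f, hf, .step h hr hrun⟩

theorem not_acceptsFrom_of_step_eq_none {s : M.State} {r : Fin n → List (Option A)}
    {c : Option A} {rest : List (Option A)} (hr : r (M.tape s) = c :: rest)
    (h : M.step s c = none) : ¬ M.AcceptsFrom s r := by
  rintro ⟨f, -, hrun⟩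
  cases hrun with
  | nil => simp at hr
  | step h' hr' _ =>
    obtain ⟨rfl, -⟩ := List.cons_eq_cons.mp (hr'.symm.trans hr)
    simp [h] at h'

theorem not_acceptsFrom_of_tape_eq_nil {s : M.State} {r : Fin n → List (Option A)}
    (hr : r (M.tape s) = []) {i : Fin n} (hi : r i ≠ []) : ¬ M.AcceptsFrom s r := by
  rintro ⟨f, -, hrun⟩
  cases hrun with
  | nil => exact hi rfl
  | step _ hr' _ => simp [hr] at hr'

end Tapes

variable (M : SemiSortedAA A 2)

def Rejects (p : M.State × Bool) (V : List (Option A)) : Prop :=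
  ∃ w, ¬ M.AcceptsFrom p.1 ![paddedTail p.2 w, V]

/-- `M.Reach p x q`: from `p`, guessing the first tape while reading `x` on the second leads to the
configuration `q` (with the second tape due next), or to `q = none` when the run gets stuck
whatever the remaining tapes. -/
inductive Reach : M.State × Bool → List A → Option (M.State × Bool) → Prop
  | nil (p : M.State × Bool) : Reach p [] (some p)
  | guess {s t : M.State} {c : Option A} {x : List A} {q : Option (M.State × Bool)}
      (h0 : M.tape s = 0) (h : M.step s c = some t) :
      Reach (t, c.isSome) x q → Reach (s, true) x q
  | read {s t : M.State} {a : A} {b : Bool} {x : List A} {q : Option (M.State × Bool)}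
      (h1 : M.tape s = 1) (h : M.step s (some a) = some t) :
      Reach (t, b) x q → Reach (s, b) (a :: x) q
  | exhausted {s : M.State} {x : List A} (h0 : M.tape s = 0) : Reach (s, false) x none
  | guessUndefined {s : M.State} {c : Option A} {x : List A} (h0 : M.tape s = 0)
      (h : M.step s c = none) : Reach (s, true) x none
  | readUndefined {s : M.State} {a : A} {b : Bool} {x : List A} (h1 : M.tape s = 1)
      (h : M.step s (some a) = none) : Reach (s, b) (a :: x) none

variable {M}

theorem rejects_cons_iff {s t : M.State} {c : Option A} (h1 : M.tape s = 1)
    (h : M.step s c = some t) (b : Bool) (V : List (Option A)) :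
    M.Rejects (s, b) (c :: V) ↔ M.Rejects (t, b) V := by
  refine exists_congr fun w ↦ not_congr ?_
  rw [acceptsFrom_iff_of_step (rest := V) (by simp [h1]) h, h1, update_vecCons_one]

theorem Rejects.of_guess {s t : M.State} {c : Option A} (h0 : M.tape s = 0)
    (h : M.step s c = some t) {V : List (Option A)} :
    M.Rejects (t, c.isSome) V → M.Rejects (s, true) V := by
  rintro ⟨w, hw⟩
  obtain ⟨w', hw'⟩ := exists_paddedTail_true_eq_cons c w
  refine ⟨w', ?_⟩
  rwa [acceptsFrom_iff_of_step (rest := paddedTail c.isSome w) (by simp [h0, hw']) h, h0,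
    update_vecCons_zero]

/-- The marker `none` means rejection only while the second tape is unfinished, hence `V ≠ []`. -/
theorem rejects_of_reach {p : M.State × Bool} {x : List A} {q : Option (M.State × Bool)}
    (hq : M.Reach p x q) {V : List (Option A)} (hV : V ≠ []) (hrej : ∀ p' ∈ q, M.Rejects p' V) :
    M.Rejects p (x.map some ++ V) := by
  induction hq with
  | nil p => exact hrej p rfl
  | guess h0 h _ ih => exact (ih hrej).of_guess h0 h
  | read h1 h _ ih => exact (rejects_cons_iff h1 h _ _).mpr (ih hrej)
  | exhausted h0 =>
    exact ⟨[], not_acceptsFrom_of_tape_eq_nil (i := 1) (by simp [h0, paddedTail]) (by simp [hV])⟩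
  | @guessUndefined s c _ h0 h =>
    obtain ⟨w, hw⟩ := exists_paddedTail_true_eq_cons c []
    exact ⟨w, not_acceptsFrom_of_step_eq_none (rest := paddedTail c.isSome []) (by simp [h0, hw]) h⟩
  | @readUndefined _ _ _ x h1 h =>
    exact ⟨[], not_acceptsFrom_of_step_eq_none (rest := x.map some ++ V) (by simp [h1]) h⟩

theorem exists_reach_of_not_acceptsFrom {V : List (Option A)} (s : M.State) (b : Bool)
    (w x : List A) (hrej : ¬ M.AcceptsFrom s ![paddedTail b w, x.map some ++ V]) :
    ∃ q, M.Reach (s, b) x q ∧ ∀ p' ∈ q, M.Rejects p' V := by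
  obtain h0 | h1 : M.tape s = 0 ∨ M.tape s = 1 := by omega
  · cases b with
    | false => exact ⟨none, .exhausted h0, by simp⟩
    | true =>
      obtain ⟨c, w', hw'⟩ := exists_cons_eq_paddedTail_true w
      cases hst : M.step s c with
      | none => exact ⟨none, .guessUndefined h0 hst, by simp⟩
      | some t =>
        rw [acceptsFrom_iff_of_step (rest := paddedTail c.isSome w') (by simp [h0, hw']) hst, h0,
          update_vecCons_zero] at hrej
        obtain ⟨q, hq, hrej'⟩ := exists_reach_of_not_acceptsFrom t c.isSome w' x hrej
        exact ⟨q, .guess h0 hst hq, hrej'⟩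
  · cases x with
    | nil => exact ⟨some (s, b), .nil _, fun p' hp' ↦ Option.some_inj.mp hp' ▸ ⟨w, hrej⟩⟩
    | cons a x =>
      cases hst : M.step s (some a) with
      | none => exact ⟨none, .readUndefined h1 hst, by simp⟩
      | some t =>
        rw [List.map_cons, List.cons_append,
          acceptsFrom_iff_of_step (rest := x.map some ++ V) (by simp [h1]) hst, h1,
          update_vecCons_one] at hrej
        obtain ⟨q, hq, hrej'⟩ := exists_reach_of_not_acceptsFrom t b w x hrej
        exact ⟨q, .read h1 hst hq, hrej'⟩
termination_by (paddedTail b w).length + x.length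
decreasing_by
  · subst_vars; simp [hw']
  · subst_vars; simp

theorem rejects_append_iff {p : M.State × Bool} {x : List A} {V : List (Option A)}
    (hV : V ≠ []) :
    M.Rejects p (x.map some ++ V) ↔ ∃ q, M.Reach p x q ∧ ∀ p' ∈ q, M.Rejects p' V :=
  ⟨fun ⟨w, hw⟩ ↦ exists_reach_of_not_acceptsFrom p.1 p.2 w x hw,
    fun ⟨_, hq, hrej⟩ ↦ rejects_of_reach hq hV hrej⟩

theorem forall_accepts_iff_not_rejects (v : List A) :
    (∀ u, M.Accepts ![u, v]) ↔ ¬ M.Rejects (M.start, true) (v.map some ++ [none]) := by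
  have hpad (u : List A) : (fun i ↦ (![u, v] i).map some ++ [none]) =
      ![paddedTail true u, v.map some ++ [none]] := by
    funext i; fin_cases i <;> rfl
  simp only [Rejects, not_exists, not_not, Accepts, hpad]
  rfl

theorem mem_leftQuotient_forall_accepts {x y : List A} :
    y ∈ Language.leftQuotient ({v | ∀ u, M.Accepts ![u, v]} : Language A) x ↔
      ¬ ∃ q, M.Reach (M.start, true) x q ∧ ∀ p ∈ q, M.Rejects p (y.map some ++ [none]) := by
  change (∀ u, M.Accepts ![u, x ++ y]) ↔ _
  rw [forall_accepts_iff_not_rejects, List.map_append, List.append_assoc,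
    rejects_append_iff (by simp)]

theorem finite_range_leftQuotient_forall_accepts :
    (Set.range (Language.leftQuotient ({v | ∀ u, M.Accepts ![u, v]} : Language A))).Finite := by
  have := M.fintype
  refine (Set.finite_range fun S : Set (Option (M.State × Bool)) ↦
    ({y | ¬ ∃ q ∈ S, ∀ p ∈ q, M.Rejects p (y.map some ++ [none])} : Language A)).subset ?_
  rintro _ ⟨x, rfl⟩
  exact ⟨{q | M.Reach (M.start, true) x q}, Set.ext fun _ ↦ mem_leftQuotient_forall_accepts.symm⟩

end SemiSortedAA

theorem regular_forall_of_quasiRegular_general {A : Type}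
    (L : Set (Fin 2 → List A)) (hL : IsQuasiRegular L) :
    Language.IsRegular { v : List A | ∀ u : List A, ![u, v] ∈ L } := by
  obtain ⟨M, hM⟩ := hL
  apply Language.IsRegular.of_finite_range_leftQuotient
  simpa only [hM] using M.finite_range_leftQuotient_forall_accepts

/-- If `L` is a quasi-regular two-variable language over a finite alphabet `A`,
then `{v : ∀ u, (u, v) ∈ L}` is a regular (one-variable) language over `A`. -/
theorem regular_forall_of_quasiRegular {A : Type} [Fintype A]
    (L : Set (Fin 2 → List A)) (hL : IsQuasiRegular L) :
    Language.IsRegular { v : List A | ∀ u : List A, ![u, v] ∈ L } :=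
  regular_forall_of_quasiRegular_general L hL
end
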